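/- Let ψ be a vector of the code space. Then for every cocycle μ ∈ C^{p−1} (dμ = 0), every cocycle ν ∈ C^{q−1} (dν = 0) and every cocycle η ∈ C^{s−1} (dη = 0), the corresponding diagonal charge-parity (transversal-CZ) operators fix ψ: (−1)^{∫ μ ∪ b ∪ c} ψ(a,b,c) = ψ(a,b,c), (−1)^{∫ a ∪ ν ∪ c} ψ(a,b,c) = ψ(a,b,c), and (−1)^{∫ a ∪ b ∪ η} ψ(a,b,c) = ψ(a,b,c) for all (a,b,c). That is, on the code space every transversal CZ operator supported on a cocycle has eigenvalue +1 (the equations-of-motion constraints of the twisted gauge theory, Eqs. (CZ_identity1)–(CZ_identity2)). -/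
import Mathlib


noncomputable section

open scoped BigOperators

/-- Transport a cochain along an equality of degrees. -/
def cellCast {cells : ℕ → Type} {i j : ℕ} (h : i = j) (x : cells i → ZMod 2) :
    cells j → ZMod 2 :=
  fun σ => x (cast (congrArg cells h.symm) σ)

/-- A *cochain system* of dimension `N` over `𝔽₂ = ZMod 2`: finite sets of cells in
each degree, `𝔽₂`-linear coboundary maps `d` with `d ∘ d = 0`, `𝔽₂`-bilinear associative
cup products satisfying the Leibniz rule, and an `𝔽₂`-linear integral on top-degree
cochains satisfying the Stokes identity.  (These are the structures carried by the `𝔽₂`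
cellular cochains of a closed Poincaré CW complex.) -/
structure CochainSystem (N : ℕ) where
  cells : ℕ → Type
  fintypeCells : ∀ i, Fintype (cells i)
  decEqCells : ∀ i, DecidableEq (cells i)
  d : ∀ i, (cells i → ZMod 2) →ₗ[ZMod 2] (cells (i + 1) → ZMod 2)
  cup : ∀ i j, (cells i → ZMod 2) →ₗ[ZMod 2]
    ((cells j → ZMod 2) →ₗ[ZMod 2] (cells (i + j) → ZMod 2))
  integ : (cells N → ZMod 2) →ₗ[ZMod 2] ZMod 2
  d_comp_d : ∀ (i : ℕ) (x : cells i → ZMod 2), d (i + 1) (d i x) = 0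
  cup_assoc : ∀ {i j k : ℕ} (u : cells i → ZMod 2) (v : cells j → ZMod 2)
    (w : cells k → ZMod 2),
    cup (i + j) k (cup i j u v) w
      = cellCast (Nat.add_assoc i j k).symm (cup i (j + k) u (cup j k v w))
  leibniz : ∀ {i j : ℕ} (u : cells i → ZMod 2) (v : cells j → ZMod 2),
    d (i + j) (cup i j u v)
      = cellCast (by omega : i + 1 + j = i + j + 1) (cup (i + 1) j (d i u) v)
        + cellCast (by omega : i + (j + 1) = i + j + 1) (cup i (j + 1) u (d j v))
  stokes : ∀ (k : ℕ) (hk : k + 1 = N) (w : cells k → ZMod 2),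
    integ (cellCast hk (d k w)) = 0

attribute [instance] CochainSystem.fintypeCells CochainSystem.decEqCells

namespace CochainSystem

variable {N : ℕ}

/-- The degree-`i` cochain space `Cⁱ`. -/
abbrev C (S : CochainSystem N) (i : ℕ) : Type := S.cells i → ZMod 2

/-- The indicator cochain `σ̃` of a cell `σ`. -/
def indicator (S : CochainSystem N) {i : ℕ} (σ : S.cells i) : S.C i :=
  fun τ => if τ = σ then 1 else 0

/-- `∫ (u ∪ v) ∪ w` when the degrees add up to `N`. -/
def integ3 (S : CochainSystem N) {i j k : ℕ} (h : i + j + k = N)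
    (u : S.C i) (v : S.C j) (w : S.C k) : ZMod 2 :=
  S.integ (cellCast h (S.cup (i + j) k (S.cup i j u v) w))

end CochainSystem

/-- The sign `(-1)ᵗ ∈ ℂ` of `t ∈ 𝔽₂`. -/
def sgn (t : ZMod 2) : ℂ := (-1 : ℂ) ^ t.val

open CochainSystem

section Twisted

variable {N p q s : ℕ}

/-- A configuration of `ℤ₂`-gauge fields for the three colours `r`, `b`, `g`. -/
abbrev Config (S : CochainSystem N) (p q s : ℕ) : Type :=
  S.C (p + 1) × S.C (q + 1) × S.C (s + 1)

/-- The three-colour qubit space `V = ((Cᵖ × C^q × C^s) → ℂ)` of the twisted code. -/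
abbrev QSpace (S : CochainSystem N) (p q s : ℕ) : Type := Config S p q s → ℂ

/-- The dressed Gauss operator `Ã^r_σ` of the twisted code:
`(Ã^r_σ ψ)(a,b,c) = (−1)^{∫ σ̃ ∪ b ∪ c} ψ(a + dσ̃, b, c)`. -/
def gaussR (S : CochainSystem N) (h : p + 1 + (q + 1) + (s + 1) = N + 1)
    (σ : S.cells p) : QSpace S p q s → QSpace S p q s :=
  fun ψ x =>
    sgn (S.integ3 (show p + (q + 1) + (s + 1) = N by omega) (S.indicator σ) x.2.1 x.2.2)
      * ψ (x.1 + S.d p (S.indicator σ), x.2.1, x.2.2)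

/-- The dressed Gauss operator `Ã^b_ξ`:
`(Ã^b_ξ ψ)(a,b,c) = (−1)^{∫ a ∪ ξ̃ ∪ c} ψ(a, b + dξ̃, c)`. -/
def gaussB (S : CochainSystem N) (h : p + 1 + (q + 1) + (s + 1) = N + 1)
    (ξ : S.cells q) : QSpace S p q s → QSpace S p q s :=
  fun ψ x =>
    sgn (S.integ3 (show p + 1 + q + (s + 1) = N by omega) x.1 (S.indicator ξ) x.2.2)
      * ψ (x.1, x.2.1 + S.d q (S.indicator ξ), x.2.2)

/-- The dressed Gauss operator `Ã^g_ζ`: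
`(Ã^g_ζ ψ)(a,b,c) = (−1)^{∫ a ∪ b ∪ ζ̃} ψ(a, b, c + dζ̃)`. -/
def gaussG (S : CochainSystem N) (h : p + 1 + (q + 1) + (s + 1) = N + 1)
    (ζ : S.cells s) : QSpace S p q s → QSpace S p q s :=
  fun ψ x =>
    sgn (S.integ3 (show p + 1 + (q + 1) + s = N by omega) x.1 x.2.1 (S.indicator ζ))
      * ψ (x.1, x.2.1, x.2.2 + S.d s (S.indicator ζ))

/-- The diagonal flux operator `B^r_τ`, multiplying `ψ(a,b,c)` by `(−1)^{(da)(τ)}`. -/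
def fluxR (S : CochainSystem N) (p q s : ℕ) (τ : S.cells (p + 2)) :
    QSpace S p q s → QSpace S p q s :=
  fun ψ x => sgn (S.d (p + 1) x.1 τ) * ψ x

/-- The diagonal flux operator `B^b_τ′`, multiplying `ψ(a,b,c)` by `(−1)^{(db)(τ′)}`. -/
def fluxB (S : CochainSystem N) (p q s : ℕ) (τ' : S.cells (q + 2)) :
    QSpace S p q s → QSpace S p q s :=
  fun ψ x => sgn (S.d (q + 1) x.2.1 τ') * ψ x

/-- The diagonal flux operator `B^g_τ″`, multiplying `ψ(a,b,c)` by `(−1)^{(dc)(τ″)}`. -/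
def fluxG (S : CochainSystem N) (p q s : ℕ) (τ'' : S.cells (s + 2)) :
    QSpace S p q s → QSpace S p q s :=
  fun ψ x => sgn (S.d (s + 1) x.2.2 τ'') * ψ x

/-- The zero-flux subspace: vectors supported on flat (cocycle) configurations. -/
def ZeroFlux (S : CochainSystem N) (p q s : ℕ) : Set (QSpace S p q s) :=
  {ψ | ∀ x : Config S p q s, ψ x ≠ 0 →
    S.d (p + 1) x.1 = 0 ∧ S.d (q + 1) x.2.1 = 0 ∧ S.d (s + 1) x.2.2 = 0}

/-- The code space of the twisted code: vectors fixed by every dressed Gauss operator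
and every flux operator. -/
def CodeSpace (S : CochainSystem N) (h : p + 1 + (q + 1) + (s + 1) = N + 1) :
    Set (QSpace S p q s) :=
  {ψ | (∀ σ : S.cells p, gaussR S h σ ψ = ψ)
    ∧ (∀ ξ : S.cells q, gaussB S h ξ ψ = ψ)
    ∧ (∀ ζ : S.cells s, gaussG S h ζ ψ = ψ)
    ∧ (∀ τ : S.cells (p + 2), fluxR S p q s τ ψ = ψ)
    ∧ (∀ τ' : S.cells (q + 2), fluxB S p q s τ' ψ = ψ)
    ∧ (∀ τ'' : S.cells (s + 2), fluxG S p q s τ'' ψ = ψ)}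

/-- The set of stabilizer generators of the twisted code. -/
def Stabilizer (S : CochainSystem N) (h : p + 1 + (q + 1) + (s + 1) = N + 1) :
    Set (QSpace S p q s → QSpace S p q s) :=
  {O | (∃ σ, O = gaussR S h σ) ∨ (∃ ξ, O = gaussB S h ξ) ∨ (∃ ζ, O = gaussG S h ζ)
    ∨ (∃ τ, O = fluxR S p q s τ) ∨ (∃ τ', O = fluxB S p q s τ')
    ∨ (∃ τ'', O = fluxG S p q s τ'')}

end Twisted

section Aux

lemma sgn_add (t u : ZMod 2) : sgn (t + u) = sgn t * sgn u := by
  simp only [sgn]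
  rw [ZMod.val_add, ← neg_one_pow_eq_pow_mod_two, pow_add]

lemma cellCast_add' {cells : ℕ → Type} {i j : ℕ} (h : i = j) (x y : cells i → ZMod 2) :
    cellCast h (x + y) = cellCast h x + cellCast h y := rfl

lemma cellCast_zero' {cells : ℕ → Type} {i j : ℕ} (h : i = j) :
    cellCast h (0 : cells i → ZMod 2) = 0 := rfl

namespace CochainSystem

variable {N : ℕ}

lemma integ3_add_left (S : CochainSystem N) {i j k : ℕ} (h : i + j + k = N)
    (u u' : S.C i) (v : S.C j) (w : S.C k) :
    S.integ3 h (u + u') v w = S.integ3 h u v w + S.integ3 h u' v w := by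
  simp [integ3, map_add, LinearMap.add_apply, cellCast_add']

lemma integ3_add_mid (S : CochainSystem N) {i j k : ℕ} (h : i + j + k = N)
    (u : S.C i) (v v' : S.C j) (w : S.C k) :
    S.integ3 h u (v + v') w = S.integ3 h u v w + S.integ3 h u v' w := by
  simp [integ3, map_add, LinearMap.add_apply, cellCast_add']

lemma integ3_add_right (S : CochainSystem N) {i j k : ℕ} (h : i + j + k = N)
    (u : S.C i) (v : S.C j) (w w' : S.C k) :
    S.integ3 h u v (w + w') = S.integ3 h u v w + S.integ3 h u v w' := by
  simp [integ3, map_add, LinearMap.add_apply, cellCast_add']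

lemma integ3_zero_left (S : CochainSystem N) {i j k : ℕ} (h : i + j + k = N)
    (v : S.C j) (w : S.C k) : S.integ3 h 0 v w = 0 := by
  simp [integ3, map_zero, cellCast_zero']

lemma integ3_zero_mid (S : CochainSystem N) {i j k : ℕ} (h : i + j + k = N)
    (u : S.C i) (w : S.C k) : S.integ3 h u 0 w = 0 := by
  simp [integ3, map_zero, cellCast_zero']

lemma integ3_zero_right (S : CochainSystem N) {i j k : ℕ} (h : i + j + k = N)
    (u : S.C i) (v : S.C j) : S.integ3 h u v 0 = 0 := by
  simp [integ3, map_zero, cellCast_zero']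

end CochainSystem

/-- Any `ZMod 2`-cochain is the sum of the indicators over its support. -/
lemma cochain_rep {N : ℕ} (S : CochainSystem N) {i : ℕ} (μ : S.C i) :
    μ = ∑ σ ∈ Finset.univ.filter (fun σ => μ σ = 1), S.indicator σ := by
  have h01 : ∀ t : ZMod 2, t = 0 ∨ t = 1 := by decide
  funext τ
  rw [Finset.sum_apply]
  simp only [CochainSystem.indicator]
  rw [Finset.sum_ite_eq]
  rcases h01 (μ τ) with h0 | h1
  · simp [h0]
  · simp [h1]

variable {N p q s : ℕ}

lemma keyR (S : CochainSystem N) (h : p + 1 + (q + 1) + (s + 1) = N + 1)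
    (hN : p + (q + 1) + (s + 1) = N)
    (ψ : QSpace S p q s) (hg : ∀ σ : S.cells p, gaussR S h σ ψ = ψ) (μ : S.C p)
    (x : Config S p q s) :
    ψ x = sgn (S.integ3 hN μ x.2.1 x.2.2) * ψ (x.1 + S.d p μ, x.2.1, x.2.2) := by
  have step : ∀ (ν : S.C p) (σ : S.cells p),
      (∀ y : Config S p q s, ψ y = sgn (S.integ3 hN ν y.2.1 y.2.2)
        * ψ (y.1 + S.d p ν, y.2.1, y.2.2)) →
      ∀ y : Config S p q s, ψ y = sgn (S.integ3 hN (ν + S.indicator σ) y.2.1 y.2.2)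
        * ψ (y.1 + S.d p (ν + S.indicator σ), y.2.1, y.2.2) := by
    intro ν σ hν y
    have h2 := congrFun (hg σ) (y.1 + S.d p ν, y.2.1, y.2.2)
    simp only [gaussR] at h2
    have h2' : sgn (S.integ3 hN (S.indicator σ) y.2.1 y.2.2)
        * ψ (y.1 + S.d p ν + S.d p (S.indicator σ), y.2.1, y.2.2)
        = ψ (y.1 + S.d p ν, y.2.1, y.2.2) := h2
    rw [map_add, ← add_assoc, S.integ3_add_left, sgn_add, mul_assoc, h2']
    exact hν y
  have main : ∀ F : Finset (S.cells p), ∀ y : Config S p q s,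
      ψ y = sgn (S.integ3 hN (∑ σ ∈ F, S.indicator σ) y.2.1 y.2.2)
        * ψ (y.1 + S.d p (∑ σ ∈ F, S.indicator σ), y.2.1, y.2.2) := by
    intro F
    induction F using Finset.induction_on with
    | empty =>
        intro y
        simp [S.integ3_zero_left, sgn]
    | @insert a F hna ih =>
        intro y
        rw [Finset.sum_insert hna, add_comm (S.indicator a)]
        exact step _ _ ih y
  have := main (Finset.univ.filter (fun σ => μ σ = 1)) x
  rwa [← cochain_rep S μ] at this

lemma keyB (S : CochainSystem N) (h : p + 1 + (q + 1) + (s + 1) = N + 1)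
    (hN : p + 1 + q + (s + 1) = N)
    (ψ : QSpace S p q s) (hg : ∀ ξ : S.cells q, gaussB S h ξ ψ = ψ) (ν : S.C q)
    (x : Config S p q s) :
    ψ x = sgn (S.integ3 hN x.1 ν x.2.2) * ψ (x.1, x.2.1 + S.d q ν, x.2.2) := by
  have step : ∀ (μ : S.C q) (ξ : S.cells q),
      (∀ y : Config S p q s, ψ y = sgn (S.integ3 hN y.1 μ y.2.2)
        * ψ (y.1, y.2.1 + S.d q μ, y.2.2)) →
      ∀ y : Config S p q s, ψ y = sgn (S.integ3 hN y.1 (μ + S.indicator ξ) y.2.2)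
        * ψ (y.1, y.2.1 + S.d q (μ + S.indicator ξ), y.2.2) := by
    intro μ ξ hμ y
    have h2 := congrFun (hg ξ) (y.1, y.2.1 + S.d q μ, y.2.2)
    simp only [gaussB] at h2
    have h2' : sgn (S.integ3 hN y.1 (S.indicator ξ) y.2.2)
        * ψ (y.1, y.2.1 + S.d q μ + S.d q (S.indicator ξ), y.2.2)
        = ψ (y.1, y.2.1 + S.d q μ, y.2.2) := h2
    rw [map_add, ← add_assoc, S.integ3_add_mid, sgn_add, mul_assoc, h2']
    exact hμ y
  have main : ∀ F : Finset (S.cells q), ∀ y : Config S p q s,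
      ψ y = sgn (S.integ3 hN y.1 (∑ ξ ∈ F, S.indicator ξ) y.2.2)
        * ψ (y.1, y.2.1 + S.d q (∑ ξ ∈ F, S.indicator ξ), y.2.2) := by
    intro F
    induction F using Finset.induction_on with
    | empty =>
        intro y
        simp [S.integ3_zero_mid, sgn]
    | @insert a F hna ih =>
        intro y
        rw [Finset.sum_insert hna, add_comm (S.indicator a)]
        exact step _ _ ih y
  have := main (Finset.univ.filter (fun ξ => ν ξ = 1)) x
  rwa [← cochain_rep S ν] at this

lemma keyG (S : CochainSystem N) (h : p + 1 + (q + 1) + (s + 1) = N + 1)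
    (hN : p + 1 + (q + 1) + s = N)
    (ψ : QSpace S p q s) (hg : ∀ ζ : S.cells s, gaussG S h ζ ψ = ψ) (η : S.C s)
    (x : Config S p q s) :
    ψ x = sgn (S.integ3 hN x.1 x.2.1 η) * ψ (x.1, x.2.1, x.2.2 + S.d s η) := by
  have step : ∀ (μ : S.C s) (ζ : S.cells s),
      (∀ y : Config S p q s, ψ y = sgn (S.integ3 hN y.1 y.2.1 μ)
        * ψ (y.1, y.2.1, y.2.2 + S.d s μ)) →
      ∀ y : Config S p q s, ψ y = sgn (S.integ3 hN y.1 y.2.1 (μ + S.indicator ζ))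
        * ψ (y.1, y.2.1, y.2.2 + S.d s (μ + S.indicator ζ)) := by
    intro μ ζ hμ y
    have h2 := congrFun (hg ζ) (y.1, y.2.1, y.2.2 + S.d s μ)
    simp only [gaussG] at h2
    have h2' : sgn (S.integ3 hN y.1 y.2.1 (S.indicator ζ))
        * ψ (y.1, y.2.1, y.2.2 + S.d s μ + S.d s (S.indicator ζ))
        = ψ (y.1, y.2.1, y.2.2 + S.d s μ) := h2
    rw [map_add, ← add_assoc, S.integ3_add_right, sgn_add, mul_assoc, h2']
    exact hμ y
  have main : ∀ F : Finset (S.cells s), ∀ y : Config S p q s,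
      ψ y = sgn (S.integ3 hN y.1 y.2.1 (∑ ζ ∈ F, S.indicator ζ))
        * ψ (y.1, y.2.1, y.2.2 + S.d s (∑ ζ ∈ F, S.indicator ζ)) := by
    intro F
    induction F using Finset.induction_on with
    | empty =>
        intro y
        simp [S.integ3_zero_right, sgn]
    | @insert a F hna ih =>
        intro y
        rw [Finset.sum_insert hna, add_comm (S.indicator a)]
        exact step _ _ ih y
  have := main (Finset.univ.filter (fun ζ => η ζ = 1)) x
  rwa [← cochain_rep S η] at this

end Aux

/-- **Equations of motion (Eqs. (CZ_identity1)–(CZ_identity2)).** On the code space of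
the twisted code, every diagonal charge-parity (transversal-CZ) operator supported on a
cocycle has eigenvalue `+1`: for every cocycle `μ ∈ C^{p−1}`, `ν ∈ C^{q−1}`,
`η ∈ C^{s−1}` and every configuration `(a,b,c)`,
`(−1)^{∫ μ ∪ b ∪ c} ψ(a,b,c) = ψ(a,b,c)`, `(−1)^{∫ a ∪ ν ∪ c} ψ(a,b,c) = ψ(a,b,c)`,
and `(−1)^{∫ a ∪ b ∪ η} ψ(a,b,c) = ψ(a,b,c)`. -/
theorem transversal_CZ_fixes_code_space
    {N p q s : ℕ} (S : CochainSystem N) (h : p + 1 + (q + 1) + (s + 1) = N + 1)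
    (ψ : QSpace S p q s) (hψ : ψ ∈ CodeSpace S h) :
    (∀ μ : S.C p, S.d p μ = 0 → ∀ x : Config S p q s,
      sgn (S.integ3 (show p + (q + 1) + (s + 1) = N by omega) μ x.2.1 x.2.2) * ψ x
        = ψ x) ∧
    (∀ ν : S.C q, S.d q ν = 0 → ∀ x : Config S p q s,
      sgn (S.integ3 (show p + 1 + q + (s + 1) = N by omega) x.1 ν x.2.2) * ψ x
        = ψ x) ∧
    (∀ η : S.C s, S.d s η = 0 → ∀ x : Config S p q s,
      sgn (S.integ3 (show p + 1 + (q + 1) + s = N by omega) x.1 x.2.1 η) * ψ x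
        = ψ x) := by
  obtain ⟨hR, hB, hG, -, -, -⟩ := hψ
  refine ⟨?_, ?_, ?_⟩
  · intro μ hdμ x
    have := keyR S h (by omega) ψ hR μ x
    rw [hdμ, add_zero] at this
    simpa using this.symm
  · intro ν hdν x
    have := keyB S h (by omega) ψ hB ν x
    rw [hdν, add_zero] at this
    simpa using this.symm
  · intro η hdη x
    have := keyG S h (by omega) ψ hG η x
    rw [hdη, add_zero] at this
    simpa using this.symm
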